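/- arXiv:2010.05692 — 3 statements merged into one kernel-verified Lean document; each statement's English description precedes it below -/
import Mathlib

section
/- In the complete subtree method, for a set R of r ≥ 1 revoked leaves in the complete binary tree with N = 2^d leaves, the number of subtrees hanging off the Steiner tree ST(R) is at most r · log₂(N/r). -/
/-- The Steiner tree of a set `R` of leaves: the set of prefixes of leaves in `R`. -/
def SteinerTree (R : Set (List Bool)) : Set (List Bool) := {v | ∃ u ∈ R, v <+: u}

/-- Roots of the subtrees hanging off the Steiner tree. -/
def hangingRoots (d : ℕ) (R : Set (List Bool)) : Set (List Bool) :=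
  {v | v.length ≤ d ∧ v ∉ SteinerTree R ∧ ∃ w ∈ SteinerTree R, ∃ b : Bool, v = w ++ [b]}

lemma two_rpow_neg_le (t : ℝ) (ht0 : 0 ≤ t) (ht1 : t ≤ 1) :
    (2:ℝ) ^ (-t) ≤ 1 - t / 2 := by
  have h := convexOn_exp.2 (Set.mem_univ (0:ℝ)) (Set.mem_univ (-Real.log 2))
    (by linarith : (0:ℝ) ≤ 1 - t) ht0 (by ring)
  simp only [smul_eq_mul, mul_zero, zero_add, Real.exp_zero, mul_one] at h
  have h2 : Real.exp (-Real.log 2) = 1/2 := by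
    rw [Real.exp_neg, Real.exp_log (by norm_num)]; norm_num
  rw [h2] at h
  have : (2:ℝ) ^ (-t) = Real.exp (t * -Real.log 2) := by
    rw [Real.rpow_def_of_pos (by norm_num)]; ring_nf
  rw [this]; linarith

lemma keyReal (r : ℝ) (m : ℕ) (h1 : (2:ℝ)^m ≤ r) (h2 : r ≤ 2^(m+1)) :
    (2:ℝ)^(m+1) ≤ r * ((m:ℝ) + 2 - Real.logb 2 r) := by
  have hr0 : (0:ℝ) < r := lt_of_lt_of_le (by positivity) h1
  set t : ℝ := Real.logb 2 r - m with htdef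
  have hlogm : Real.logb 2 ((2:ℝ)^m) = m := by
    rw [Real.logb_pow]; simp [Real.logb_self_eq_one]
  have hlogm1 : Real.logb 2 ((2:ℝ)^(m+1)) = m+1 := by
    rw [Real.logb_pow]; simp [Real.logb_self_eq_one]
  have ht0 : 0 ≤ t := by
    have := Real.logb_le_logb_of_le (by norm_num : (1:ℝ) < 2) (by positivity) h1
    rw [hlogm] at this; simp [htdef]; linarith
  have ht1 : t ≤ 1 := by
    have := Real.logb_le_logb_of_le (by norm_num : (1:ℝ) < 2) hr0 h2
    rw [hlogm1] at this; simp [htdef]; linarith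
  have hrt : r = (2:ℝ) ^ ((m:ℝ) + t) := by
    rw [htdef]
    have h' : (m:ℝ) + (Real.logb 2 r - m) = Real.logb 2 r := by ring
    rw [h', Real.rpow_logb (by norm_num) (by norm_num) hr0]
  have hb := two_rpow_neg_le t ht0 ht1
  have key : (2:ℝ) ^ ((m:ℝ) + t) * (2 * (2:ℝ)^(-t)) ≤ r * (2 - t) := by
    rw [hrt]
    have hp : (0:ℝ) < (2:ℝ) ^ ((m:ℝ) + t) := Real.rpow_pos_of_pos (by norm_num) _
    nlinarith
  have heq : (2:ℝ) ^ ((m:ℝ) + t) * (2 * (2:ℝ)^(-t)) = 2^(m+1) := by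
    have e1 : (2:ℝ) ^ ((m:ℝ)+t) * (2:ℝ)^(-t) = 2^((m:ℝ)) := by
      rw [← Real.rpow_add (by norm_num)]; ring_nf
    calc (2:ℝ) ^ ((m:ℝ)+t) * (2 * (2:ℝ)^(-t))
        = (2:ℝ) ^ ((m:ℝ)+t) * (2:ℝ)^(-t) * 2 := by ring
      _ = (2:ℝ)^((m:ℝ)) * 2 := by rw [e1]
      _ = (2:ℝ)^((m:ℝ)+1) := (Real.rpow_add_one (by norm_num) _).symm
      _ = 2^(m+1) := by rw [show ((m:ℝ)+1) = ((m+1:ℕ):ℝ) by push_cast; ring,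
          Real.rpow_natCast]
  have hfin : (m:ℝ) + 2 - Real.logb 2 r = 2 - t := by rw [htdef]; ring
  rw [hfin, ← heq]; exact key

lemma sumMinBound (d r : ℕ) (hr1 : 1 ≤ r) (hrN : r ≤ 2^d) :
    (∑ k ∈ Finset.range d, ((min (2^k) r : ℕ) : ℝ)) + 1 - r
      ≤ r * Real.logb 2 ((2^d : ℝ) / r) := by
  have hr0 : (0:ℝ) < r := by exact_mod_cast hr1
  have hlogdiv : Real.logb 2 ((2^d : ℝ) / r) = d - Real.logb 2 r := by
    rw [Real.logb_div (by positivity) (by positivity), Real.logb_pow,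
      Real.logb_self_eq_one (by norm_num)]
    ring
  rw [hlogdiv]
  set m := Nat.log 2 r with hm
  have hml : 2^m ≤ r := Nat.pow_log_le_self 2 (by omega)
  have hmu : r < 2^(m+1) := Nat.lt_pow_succ_log_self (by norm_num) r
  have hmd : m ≤ d := by
    by_contra h
    have : 2^d < 2^m := Nat.pow_lt_pow_right (by norm_num) (by omega)
    omega
  have hgeom : ∀ n : ℕ, (∑ k ∈ Finset.range n, ((2:ℝ)^k)) = 2^n - 1 := by
    intro n
    rw [geom_sum_eq (by norm_num)]; norm_num
  rcases eq_or_lt_of_le hmd with heq | hlt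
  · have hrd : r = 2^d := by
      have : 2^d ≤ r := heq ▸ hml
      omega
    have hmin : ∀ k ∈ Finset.range d, ((min (2^k) r : ℕ) : ℝ) = (2:ℝ)^k := by
      intro k hk
      simp only [Finset.mem_range] at hk
      have : 2^k ≤ r := by
        rw [hrd]; exact Nat.pow_le_pow_right (by norm_num) hk.le
      rw [min_eq_left this]; push_cast; ring
    rw [Finset.sum_congr rfl hmin, hgeom]
    have : Real.logb 2 (r:ℝ) = d := by
      rw [hrd]; push_cast
      rw [Real.logb_pow, Real.logb_self_eq_one (by norm_num)]; ring
    rw [this, hrd]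
    push_cast
    ring_nf
    norm_num
  · have hsplit : (∑ k ∈ Finset.range d, ((min (2^k) r : ℕ) : ℝ))
        = (∑ k ∈ Finset.range (m+1), ((min (2^k) r : ℕ) : ℝ))
          + ∑ k ∈ Finset.Ico (m+1) d, ((min (2^k) r : ℕ) : ℝ) := by
      rw [Finset.range_eq_Ico, ← Finset.sum_Ico_consecutive _ (Nat.zero_le (m+1))
        (by omega : m+1 ≤ d), ← Finset.range_eq_Ico]
    have h1 : (∑ k ∈ Finset.range (m+1), ((min (2^k) r : ℕ) : ℝ)) = 2^(m+1) - 1 := by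
      rw [Finset.sum_congr rfl (fun k hk => ?_), hgeom]
      simp only [Finset.mem_range] at hk
      have : 2^k ≤ r := le_trans (Nat.pow_le_pow_right (by norm_num) (by omega)) hml
      rw [min_eq_left this]; push_cast; ring
    have h2 : (∑ k ∈ Finset.Ico (m+1) d, ((min (2^k) r : ℕ) : ℝ)) = ((d:ℝ) - (m+1)) * r := by
      rw [Finset.sum_congr rfl (fun k hk => ?_), Finset.sum_const, Nat.card_Ico]
      · rw [nsmul_eq_mul]
        congr 1
        push_cast [Nat.cast_sub (by omega : m+1 ≤ d)]
        ring
      · simp only [Finset.mem_Ico] at hk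
        have : r ≤ 2^k := le_trans hmu.le (Nat.pow_le_pow_right (by norm_num) hk.1)
        rw [min_eq_right this]
    rw [hsplit, h1, h2]
    have hkey := keyReal r m (by exact_mod_cast hml) (by exact_mod_cast hmu.le)
    push_cast at hkey ⊢
    nlinarith [hkey]

/-- For a set `R` of `r ≥ 1` revoked leaves of the complete binary tree with
`N = 2 ^ d` leaves, the number of subtrees hanging off `ST(R)` is at most
`r · log₂ (N / r)`. -/
theorem hanging_subtrees_card_le (d : ℕ) (R : Set (List Bool))
    (hRleaf : ∀ u ∈ R, u.length = d) (r : ℕ) (hr : r = R.ncard) (hr1 : 1 ≤ r)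
    (N : ℕ) (hN : N = 2 ^ d) :
    ((hangingRoots d R).ncard : ℝ) ≤ (r : ℝ) * Real.logb 2 ((N : ℝ) / (r : ℝ)) := by
  subst hN
  classical
  have hRsub : R ⊆ {l : List Bool | l.length = d} := fun u hu => hRleaf u hu
  have hRfin : R.Finite := (List.finite_length_eq Bool d).subset hRsub
  set F : Finset (List Bool) := hRfin.toFinset with hF
  have hmemF : ∀ u, u ∈ F ↔ u ∈ R := fun u => hRfin.mem_toFinset
  have hFcard : F.card = r := by rw [hr, Set.ncard_eq_toFinset_card R hRfin]
  have hFne : F.Nonempty := Finset.card_pos.mp (by omega)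
  set S : ℕ → Finset (List Bool) := fun k => F.image (fun u => u.take k) with hS
  have hS_le_r : ∀ k, (S k).card ≤ r := fun k => hFcard ▸ Finset.card_image_le
  have hlenS : ∀ k, k ≤ d → ∀ x ∈ S k, x.length = k := by
    intro k hk x hx
    simp only [hS, Finset.mem_image] at hx
    obtain ⟨u, hu, rfl⟩ := hx
    have := hRleaf u ((hmemF u).mp hu)
    rw [List.length_take]; omega
  have hS_le_pow : ∀ k, k ≤ d → (S k).card ≤ 2 ^ k := by
    intro k hk
    have hsub : S k ⊆ (Finset.univ : Finset (List.Vector Bool k)).image (·.toList) := by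
      intro x hx
      exact Finset.mem_image.mpr ⟨⟨x, hlenS k hk x hx⟩, Finset.mem_univ _, rfl⟩
    calc (S k).card ≤ _ := Finset.card_le_card hsub
      _ ≤ (Finset.univ : Finset (List.Vector Bool k)).card := Finset.card_image_le
      _ = 2 ^ k := by rw [Finset.card_univ, card_vector, Fintype.card_bool]
  set C : ℕ → Finset (List Bool) :=
    fun k => ((S k) ×ˢ (Finset.univ : Finset Bool)).image (fun p => p.1 ++ [p.2]) with hC
  have hCcard : ∀ k, (C k).card = 2 * (S k).card := by
    intro k
    rw [hC]
    have hinj : Function.Injective (fun p : List Bool × Bool => p.1 ++ [p.2]) := by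
      intro p q hpq
      simp only at hpq
      have hl : p.1.length = q.1.length := by
        have := congrArg List.length hpq; simpa using this
      obtain ⟨h1, h2⟩ := List.append_inj hpq hl
      exact Prod.ext h1 (by simpa using h2)
    rw [Finset.card_image_of_injective _ hinj, Finset.card_product, Finset.card_univ,
      Fintype.card_bool]
    ring
  have hSsubC : ∀ k, k < d → S (k+1) ⊆ C k := by
    intro k hk x hx
    simp only [hS, Finset.mem_image] at hx
    obtain ⟨u, hu, rfl⟩ := hx
    have hud : u.length = d := hRleaf u ((hmemF u).mp hu)
    have hklt : k < u.length := by omega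
    have htake : u.take (k+1) = u.take k ++ [u.get ⟨k, hklt⟩] := by
      rw [List.take_succ]; simp [List.getElem?_eq_getElem hklt]
    rw [hC]
    refine Finset.mem_image.mpr ⟨(u.take k, u.get ⟨k, hklt⟩), ?_, htake.symm⟩
    exact Finset.mem_product.mpr ⟨Finset.mem_image.mpr ⟨u, hu, rfl⟩, Finset.mem_univ _⟩
  set Hk : ℕ → Finset (List Bool) := fun k => C k \ S (k+1) with hHk
  set H : Finset (List Bool) := (Finset.range d).biUnion Hk with hH
  have hsub : hangingRoots d R ⊆ ↑H := by
    intro v hv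
    obtain ⟨hlen, hnot, w, hwST, b, rfl⟩ := hv
    obtain ⟨u, huR, hwu⟩ := hwST
    have hud : u.length = d := hRleaf u huR
    have hkd : w.length + 1 ≤ d := by
      rw [List.length_append] at hlen; simpa using hlen
    have hw : w = u.take w.length := List.prefix_iff_eq_take.mp hwu
    have hwS : w ∈ S w.length := Finset.mem_image.mpr ⟨u, (hmemF u).mpr huR, hw.symm⟩
    have hmemC : w ++ [b] ∈ C w.length :=
      Finset.mem_image.mpr ⟨(w, b), Finset.mem_product.mpr ⟨hwS, Finset.mem_univ _⟩, rfl⟩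
    have hnotS : w ++ [b] ∉ S (w.length + 1) := by
      intro hmem
      simp only [hS, Finset.mem_image] at hmem
      obtain ⟨u', hu', heq⟩ := hmem
      exact hnot ⟨u', (hmemF u').mp hu', heq ▸ List.take_prefix _ _⟩
    refine Finset.mem_coe.mpr
      (Finset.mem_biUnion.mpr ⟨w.length, Finset.mem_range.mpr (by omega), ?_⟩)
    exact Finset.mem_sdiff.mpr ⟨hmemC, hnotS⟩
  have hncard : (hangingRoots d R).ncard ≤ H.card := by
    rw [← Set.ncard_coe_finset H]
    exact Set.ncard_le_ncard hsub H.finite_toSet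
  have hHcard : (H.card : ℝ)
      ≤ ∑ k ∈ Finset.range d, (2 * ((S k).card : ℝ) - ((S (k+1)).card : ℝ)) := by
    calc (H.card : ℝ) ≤ ((∑ k ∈ Finset.range d, (Hk k).card : ℕ) : ℝ) := by
          exact_mod_cast Finset.card_biUnion_le
      _ = ∑ k ∈ Finset.range d, ((Hk k).card : ℝ) := by push_cast; rfl
      _ ≤ _ := by
          apply Finset.sum_le_sum
          intro k hk
          rw [Finset.mem_range] at hk
          have hsub' := hSsubC k hk
          have h1 : ((Hk k).card : ℝ) = ((C k).card : ℝ) - ((S (k+1)).card : ℝ) := by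
            rw [hHk]
            rw [Finset.card_sdiff_of_subset hsub', Nat.cast_sub (Finset.card_le_card hsub')]
          rw [h1, hCcard]
          push_cast
          exact le_refl _
  have htel : ∑ k ∈ Finset.range d, (2 * ((S k).card : ℝ) - ((S (k+1)).card : ℝ))
      = (∑ k ∈ Finset.range d, ((S k).card : ℝ)) + ((S 0).card : ℝ) - ((S d).card : ℝ) := by
    have hterm : ∀ k, 2 * ((S k).card : ℝ) - ((S (k+1)).card : ℝ)
        = ((S k).card : ℝ) + (((S k).card : ℝ) - ((S (k+1)).card : ℝ)) := fun k => by ring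
    simp_rw [hterm]
    rw [Finset.sum_add_distrib, Finset.sum_range_sub' (fun k => ((S k).card : ℝ))]
    ring
  have hS0 : (S 0).card = 1 := by
    have : S 0 = {([] : List Bool)} := by
      rw [hS]
      simp only [List.take_zero]
      exact Finset.image_const hFne _
    rw [this, Finset.card_singleton]
  have hSd : (S d).card = r := by
    have : S d = F := by
      rw [hS]
      ext x
      simp only [Finset.mem_image]
      constructor
      · rintro ⟨u, hu, rfl⟩
        rwa [List.take_of_length_le (le_of_eq (hRleaf u ((hmemF u).mp hu)))]
      · intro hx
        exact ⟨x, hx, List.take_of_length_le (le_of_eq (hRleaf x ((hmemF x).mp hx)))⟩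
    rw [this, hFcard]
  have hrN : r ≤ 2^d := hSd ▸ hS_le_pow d le_rfl
  have hminsum : (∑ k ∈ Finset.range d, ((S k).card : ℝ))
      ≤ ∑ k ∈ Finset.range d, ((min (2^k) r : ℕ) : ℝ) := by
    apply Finset.sum_le_sum
    intro k hk
    rw [Finset.mem_range] at hk
    exact_mod_cast le_min (hS_le_pow k hk.le) (hS_le_r k)
  have hfinal := sumMinBound d r hr1 hrN
  have hcast : ((2^d : ℕ) : ℝ) = (2:ℝ)^d := by push_cast; ring
  rw [hcast]
  calc ((hangingRoots d R).ncard : ℝ) ≤ (H.card : ℝ) := by exact_mod_cast hncard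
    _ ≤ ∑ k ∈ Finset.range d, (2 * ((S k).card : ℝ) - ((S (k+1)).card : ℝ)) := hHcard
    _ = (∑ k ∈ Finset.range d, ((S k).card : ℝ)) + 1 - r := by rw [htel, hS0, hSd]; norm_num
    _ ≤ (∑ k ∈ Finset.range d, ((min (2^k) r : ℕ) : ℝ)) + 1 - r := by linarith
    _ ≤ r * Real.logb 2 ((2^d : ℝ) / r) := hfinal
end

section
/- In the complete subtree method, every non-revoked receiver u belongs to exactly one of the subsets S_{i₁}, …, S_{i_m} in the cover of N \ R, while every revoked receiver belongs to none of them. -/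
/-- The subset `S_v`: the set of leaves of the subtree rooted at node `v`. -/
def subtreeLeaves (d : ℕ) (v : List Bool) : Set (List Bool) :=
  {u | u.length = d ∧ v <+: u}

lemma steiner_prefix_closed {R : Set (List Bool)} {x y : List Bool}
    (hxy : x <+: y) (hy : y ∈ SteinerTree R) : x ∈ SteinerTree R := by
  obtain ⟨r, hr, hyr⟩ := hy
  exact ⟨r, hr, hxy.trans hyr⟩

/-- Every non-revoked receiver belongs to exactly one subset in the cover of `N \ R`,
while every revoked receiver belongs to none of them. -/
theorem cover_membership (d : ℕ) (R : Set (List Bool)) (hR : R.Nonempty)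
    (hRleaf : ∀ u ∈ R, u.length = d) (u : List Bool) (hu : u.length = d) :
    (u ∉ R → ∃! v, v ∈ hangingRoots d R ∧ u ∈ subtreeLeaves d v) ∧
      (u ∈ R → ∀ v ∈ hangingRoots d R, u ∉ subtreeLeaves d v) := by
  classical
  constructor
  · intro huR
    have hud : u.take d ∉ SteinerTree R := by
      rw [← hu, List.take_length]
      rintro ⟨r, hr, hur⟩
      have : u = r := hur.eq_of_length (hu.trans (hRleaf r hr).symm)
      exact huR (this ▸ hr)
    have hex : ∃ n, u.take n ∉ SteinerTree R := ⟨d, hud⟩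
    set k := Nat.find hex with hkdef
    have hkspec : u.take k ∉ SteinerTree R := Nat.find_spec hex
    have hkmin : ∀ m, m < k → u.take m ∈ SteinerTree R := by
      intro m hm
      by_contra h
      exact absurd (Nat.find_le h) (not_le.mpr hm)
    have hk0 : 0 < k := by
      rcases Nat.eq_zero_or_pos k with h | h
      · exfalso
        apply hkspec
        rw [h, List.take_zero]
        obtain ⟨r, hr⟩ := hR
        exact ⟨r, hr, List.nil_prefix⟩
      · exact h
    have hkd : k ≤ d := Nat.find_le hud
    have hk1d : k - 1 < u.length := by omega
    have htake : u.take k = u.take (k - 1) ++ [u[k - 1]'hk1d] := by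
      have h1 := List.take_succ (l := u) (i := k - 1)
      rw [List.getElem?_eq_getElem hk1d] at h1
      have h2 : k - 1 + 1 = k := by omega
      rw [h2] at h1
      exact h1
    refine ⟨u.take k, ⟨⟨?_, hkspec, u.take (k - 1), hkmin _ (by omega),
      u[k - 1]'hk1d, htake⟩, hu, List.take_prefix _ _⟩, ?_⟩
    · rw [List.length_take]; omega
    · rintro v' ⟨⟨hlen', hnst', w', hw', b', hvw'⟩, _, hpre'⟩
      set j := v'.length with hjdef
      have hvtake : v' = u.take j := List.prefix_iff_eq_take.mp hpre'
      have hj0 : 0 < j := by rw [hjdef, hvw']; simp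
      have hjk : ¬ k < j := by
        intro hlt
        have hw'take : w' = u.take (j - 1) := by
          have h1 : v'.take (j - 1) = w' := by
            rw [hvw']
            have : w'.length = j - 1 := by
              have : j = w'.length + 1 := by rw [hjdef, hvw']; simp
              omega
            rw [← this, List.take_left]
          rw [← h1, hvtake, List.take_take, min_comm]
          congr 1
          omega
        have hkle : k ≤ j - 1 := by omega
        have : u.take k = (u.take (j - 1)).take k := by
          rw [List.take_take, min_eq_left hkle]
        apply hkspec
        rw [this]
        exact steiner_prefix_closed (List.take_prefix _ _) (hw'take ▸ hw')
      have hjk' : ¬ j < k := fun h => hnst' (hvtake ▸ hkmin j h)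
      have : j = k := by omega
      rw [hvtake, this]
  · rintro huR v ⟨_, hnst, _⟩ ⟨_, hvu⟩
    exact hnst ⟨u, huR, hvu⟩
end

section
/- For the complete subtree method with N = 2^d users and a revoked set of size r with 1 ≤ r ≤ N, the total communication (number of key encryptions in a broadcast) is at most r·log₂(N/r), the per-receiver storage is log₂ N + 1 keys, and the center's storage is 2N − 1 keys; in particular r·log₂(N/r) ≤ N − 1 for all 1 ≤ r ≤ N (taking log₂(N/r) as a real number and the convention that the bound is 0 when r = N). -/
/-! ### Auxiliary counting lemmas -/

lemma CS.cardLen (n : ℕ) : {l : List Bool | l.length = n}.ncard = 2 ^ n := by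
  have : {l : List Bool | l.length = n}.ncard = Nat.card (List.Vector Bool n) := by
    rw [← Nat.card_coe_set_eq]; rfl
  rw [this, Nat.card_eq_fintype_card, card_vector]
  simp

lemma CS.cardLe (n : ℕ) : {l : List Bool | l.length ≤ n}.ncard = 2 ^ (n+1) - 1 := by
  induction n with
  | zero =>
    have : {l : List Bool | l.length ≤ 0} = {([] : List Bool)} := by
      ext l; simp [List.length_eq_zero_iff]
    simp [this]
  | succ n ih =>
    have hsplit : {l : List Bool | l.length ≤ n+1} =
        {l : List Bool | l.length ≤ n} ∪ {l : List Bool | l.length = n+1} := by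
      ext l; simp [Nat.lt_succ_iff]; omega
    have hdisj : Disjoint {l : List Bool | l.length ≤ n} {l : List Bool | l.length = n+1} := by
      rw [Set.disjoint_left]; intro l hl hl'; simp at hl hl'; omega
    rw [hsplit, Set.ncard_union_eq hdisj (List.finite_length_le Bool n)
      (List.finite_length_eq Bool (n+1)), ih, CS.cardLen]
    have : 1 ≤ 2 ^ (n+1) := Nat.one_le_two_pow
    ring_nf
    omega

lemma CS.ncard_biUnion_le {α : Type*} (n : ℕ) (f : ℕ → Set α) :
    (⋃ k ∈ Finset.range n, f k).ncard ≤ ∑ k ∈ Finset.range n, (f k).ncard := by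
  induction n with
  | zero => simp
  | succ n ih =>
    rw [Finset.range_add_one, Finset.sum_insert (by simp), Finset.set_biUnion_insert]
    exact (Set.ncard_union_le _ _).trans (add_le_add_right ih _)

lemma CS.sum_pow (m : ℕ) : ∑ k ∈ Finset.range m, 2 ^ k = 2 ^ m - 1 := by
  induction m with
  | zero => simp
  | succ m ih =>
    rw [Finset.sum_range_succ, ih]
    have : 1 ≤ 2 ^ m := Nat.one_le_two_pow
    have : 2 ^ (m+1) = 2 * 2 ^ m := by ring
    omega

/-! ### Logarithm lemmas -/

lemma CS.logb_ge_sub_one {t : ℝ} (h1 : 1 ≤ t) (h2 : t ≤ 2) : t - 1 ≤ Real.logb 2 t := by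
  have hconc : ConcaveOn ℝ (Set.Ioi 0) Real.log := strictConcaveOn_log_Ioi.concaveOn
  have hc := hconc.2 (Set.mem_Ioi.2 one_pos : (1:ℝ) ∈ Set.Ioi 0)
    (Set.mem_Ioi.2 two_pos : (2:ℝ) ∈ Set.Ioi 0)
    (show (0:ℝ) ≤ 2 - t by linarith) (show (0:ℝ) ≤ t - 1 by linarith)
    (show (2 - t) + (t - 1) = 1 by ring)
  have h2t : (2 - t) • (1:ℝ) + (t - 1) • (2:ℝ) = t := by simp [smul_eq_mul]; ring
  rw [h2t] at hc
  have hlog : (t - 1) * Real.log 2 ≤ Real.log t := by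
    simpa [Real.log_one, smul_eq_mul] using hc
  rw [Real.logb, le_div_iff₀ (Real.log_pos one_lt_two)]
  exact hlog

lemma CS.logb_le_sub_one {t : ℝ} (h : 2 ≤ t) : Real.logb 2 t ≤ t - 1 := by
  have ht2 : (0:ℝ) < t / 2 := by linarith
  have h1 : Real.log (t / 2) ≤ t / 2 - 1 := Real.log_le_sub_one_of_pos ht2
  have hl2 : (0.6931471803 : ℝ) < Real.log 2 := Real.log_two_gt_d9
  have ht : Real.log t = Real.log 2 + Real.log (t / 2) := by
    rw [← Real.log_mul (by norm_num) (ne_of_gt ht2)]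
    ring_nf
  rw [Real.logb, ht, div_le_iff₀ (by linarith)]
  nlinarith [Real.log_nonneg (by linarith : (1:ℝ) ≤ t/2)]

/-! ### Level sets of the Steiner tree -/

/-- The set of nodes of the Steiner tree of `R` at depth `k` (for `R` a set of leaves). -/
def CS.Sk (R : Set (List Bool)) (k : ℕ) : Set (List Bool) := (fun u => u.take k) '' R

/-- Children of the depth-`k` nodes of the Steiner tree. -/
def CS.Ch (R : Set (List Bool)) (k : ℕ) : Set (List Bool) :=
  ((· ++ [false]) '' CS.Sk R k) ∪ ((· ++ [true]) '' CS.Sk R k)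

lemma CS.mem_steiner {d : ℕ} {R : Set (List Bool)} (hRleaf : ∀ u ∈ R, u.length = d)
    {v : List Bool} : v ∈ SteinerTree R ↔ v.length ≤ d ∧ v ∈ CS.Sk R v.length := by
  constructor
  · rintro ⟨u, hu, hpre⟩
    have hlen := hpre.length_le
    rw [hRleaf u hu] at hlen
    exact ⟨hlen, u, hu, (List.prefix_iff_eq_take.1 hpre).symm⟩
  · rintro ⟨hle, u, hu, hv⟩
    have : v <+: u := by rw [← hv]; exact List.take_prefix _ _
    exact ⟨u, hu, this⟩

lemma CS.Sk_finite {R : Set (List Bool)} (hfin : R.Finite) (k : ℕ) : (CS.Sk R k).Finite :=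
  hfin.image _

lemma CS.Ch_finite {R : Set (List Bool)} (hfin : R.Finite) (k : ℕ) : (CS.Ch R k).Finite :=
  ((CS.Sk_finite hfin k).image _).union ((CS.Sk_finite hfin k).image _)

lemma CS.Sk_succ_subset {d : ℕ} {R : Set (List Bool)} (hRleaf : ∀ u ∈ R, u.length = d)
    {k : ℕ} (hk : k < d) : CS.Sk R (k+1) ⊆ CS.Ch R k := by
  rintro _ ⟨u, hu, rfl⟩
  have hlen : k < u.length := by rw [hRleaf u hu]; exact hk
  have htake : u.take (k+1) = u.take k ++ [u[k]] := by
    rw [List.take_succ, List.getElem?_eq_getElem hlen]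
    rfl
  show u.take (k+1) ∈ CS.Ch R k
  rw [htake]
  rcases Bool.dichotomy u[k] with hb | hb <;> rw [hb]
  · exact Or.inl ⟨u.take k, ⟨u, hu, rfl⟩, rfl⟩
  · exact Or.inr ⟨u.take k, ⟨u, hu, rfl⟩, rfl⟩

lemma CS.Ch_ncard_le {R : Set (List Bool)} (hfin : R.Finite) (k : ℕ) :
    (CS.Ch R k).ncard ≤ 2 * (CS.Sk R k).ncard := by
  refine (Set.ncard_union_le _ _).trans ?_
  have h1 := Set.ncard_image_le (f := (· ++ [false])) (CS.Sk_finite hfin k)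
  have h2 := Set.ncard_image_le (f := (· ++ [true])) (CS.Sk_finite hfin k)
  omega

lemma CS.hanging_subset {d : ℕ} {R : Set (List Bool)} (hRleaf : ∀ u ∈ R, u.length = d) :
    hangingRoots d R ⊆ ⋃ k ∈ Finset.range d, (CS.Ch R k \ CS.Sk R (k+1)) := by
  rintro v ⟨hlen, hnot, w, hwST, b, rfl⟩
  obtain ⟨hwle, hwSk⟩ := (CS.mem_steiner hRleaf).1 hwST
  have hk : w.length < d := by
    simp only [List.length_append, List.length_cons, List.length_nil] at hlen
    omega
  refine Set.mem_biUnion (Finset.mem_range.2 hk) ⟨?_, ?_⟩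
  · rcases Bool.dichotomy b with hb | hb <;> rw [hb]
    · exact Or.inl ⟨w, hwSk, rfl⟩
    · exact Or.inr ⟨w, hwSk, rfl⟩
  · intro hmem
    apply hnot
    refine (CS.mem_steiner hRleaf).2 ⟨hlen, ?_⟩
    have hlv : (w ++ [b]).length = w.length + 1 := by simp
    rw [hlv]
    exact hmem

lemma CS.hanging_le_sum {d : ℕ} {R : Set (List Bool)} (hRleaf : ∀ u ∈ R, u.length = d)
    (hfin : R.Finite) :
    (hangingRoots d R).ncard ≤
      ∑ k ∈ Finset.range d, (2 * (CS.Sk R k).ncard - (CS.Sk R (k+1)).ncard) := by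
  have hfinU : (⋃ k ∈ Finset.range d, (CS.Ch R k \ CS.Sk R (k+1))).Finite :=
    Set.Finite.biUnion (Finset.range d).finite_toSet
      (fun k _ => (CS.Ch_finite hfin k).diff)
  calc (hangingRoots d R).ncard
      ≤ (⋃ k ∈ Finset.range d, (CS.Ch R k \ CS.Sk R (k+1))).ncard :=
        Set.ncard_le_ncard (CS.hanging_subset hRleaf) hfinU
    _ ≤ ∑ k ∈ Finset.range d, (CS.Ch R k \ CS.Sk R (k+1)).ncard :=
        CS.ncard_biUnion_le d _
    _ ≤ ∑ k ∈ Finset.range d, (2 * (CS.Sk R k).ncard - (CS.Sk R (k+1)).ncard) := by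
        refine Finset.sum_le_sum fun k hk => ?_
        rw [Set.ncard_diff (CS.Sk_succ_subset hRleaf (Finset.mem_range.1 hk))
          (CS.Sk_finite hfin (k+1))]
        have := CS.Ch_ncard_le hfin k
        omega

/-! ### The main theorem -/

/-- Complexity of the complete subtree method with `N = 2 ^ d` users and `r` revoked
users (`1 ≤ r ≤ N`): the number of key encryptions in a broadcast (one per hanging
subtree) is at most `r·log₂(N/r)`; each receiver stores `log₂ N + 1` keys (the keys on
its root-to-leaf path); the center stores `2N − 1` keys (one per node); and
`r·log₂(N/r) ≤ N − 1` for all `1 ≤ r ≤ N`. -/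
theorem complete_subtree_complexity (d : ℕ) (R : Set (List Bool))
    (hRleaf : ∀ u ∈ R, u.length = d) (r : ℕ) (hr : r = R.ncard) (hr1 : 1 ≤ r)
    (N : ℕ) (hN : N = 2 ^ d) :
    (((hangingRoots d R).ncard : ℝ) ≤ (r : ℝ) * Real.logb 2 ((N : ℝ) / (r : ℝ))) ∧
      (∀ u : List Bool, u.length = d →
        Set.ncard {v : List Bool | v <+: u} = Nat.log 2 N + 1) ∧
      (Set.ncard {v : List Bool | v.length ≤ d} = 2 * N - 1) ∧
      (∀ r' : ℕ, 1 ≤ r' → r' ≤ N →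
        (r' : ℝ) * Real.logb 2 ((N : ℝ) / (r' : ℝ)) ≤ (N : ℝ) - 1) := by
  have hfin : R.Finite := (List.finite_length_eq Bool d).subset (fun u hu => hRleaf u hu)
  have hne : R.Nonempty := Set.nonempty_of_ncard_ne_zero (by omega)
  refine ⟨?_, ?_, ?_, ?_⟩
  · -- communication bound
    set s : ℕ → ℕ := fun k => (CS.Sk R k).ncard with hs
    -- basic facts about level sizes
    have hs0 : s 0 = 1 := by
      have : CS.Sk R 0 = {([] : List Bool)} := by
        ext v
        simp only [CS.Sk, Set.mem_image, List.take_zero, Set.mem_singleton_iff]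
        exact ⟨fun ⟨u, _, h⟩ => h.symm, fun h => ⟨hne.choose, hne.choose_spec, h.symm⟩⟩
      simp [hs, this]
    have hsd : s d = r := by
      have : CS.Sk R d = R := by
        ext u
        constructor
        · rintro ⟨u', hu', rfl⟩
          show u'.take d ∈ R
          rwa [← hRleaf u' hu', List.take_length]
        · intro hu
          refine ⟨u, hu, ?_⟩
          show u.take d = u
          rw [← hRleaf u hu, List.take_length]
      show (CS.Sk R d).ncard = r
      rw [this, hr]
    have hpow : ∀ k, k ≤ d → s k ≤ 2 ^ k := by
      intro k hk
      have hsub : CS.Sk R k ⊆ {l : List Bool | l.length = k} := by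
        rintro _ ⟨u, hu, rfl⟩
        show (u.take k).length = k
        rw [List.length_take, hRleaf u hu]
        omega
      calc s k ≤ {l : List Bool | l.length = k}.ncard :=
            Set.ncard_le_ncard hsub (List.finite_length_eq Bool k)
        _ = 2 ^ k := CS.cardLen k
    have hler : ∀ k, s k ≤ r := by
      intro k
      rw [hr]
      exact Set.ncard_image_le hfin
    have hdouble : ∀ k, k < d → s (k+1) ≤ 2 * s k := fun k hk =>
      (Set.ncard_le_ncard (CS.Sk_succ_subset hRleaf hk) (CS.Ch_finite hfin k)).trans
        (CS.Ch_ncard_le hfin k)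
    -- the ceiling log
    set m : ℕ := Nat.clog 2 r with hm
    have hrN : r ≤ 2 ^ d := by rw [← hsd]; exact hpow d le_rfl
    have hmd : m ≤ d := by
      calc m ≤ Nat.clog 2 (2 ^ d) := Nat.clog_mono_right 2 hrN
        _ = d := Nat.clog_pow 2 d one_lt_two
    have hr2m : r ≤ 2 ^ m := Nat.le_pow_clog one_lt_two r
    have h2mr : 2 ^ m ≤ 2 * r := by
      rcases eq_or_lt_of_le hr1 with h1 | h2
      · rw [hm, ← h1]
        simp [Nat.clog_one_right]
      · have hm1 : 1 ≤ m := Nat.clog_pos one_lt_two h2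
        have hpred : 2 ^ (m - 1) < r := by
          have := Nat.pow_pred_clog_lt_self one_lt_two h2
          simpa [hm] using this
        have : 2 ^ m = 2 * 2 ^ (m - 1) := by
          rw [← pow_succ']
          congr 1
          omega
        omega
    -- natural-number sum bound
    have hsum : ∑ k ∈ Finset.range d, s k ≤ (2 ^ m - 1) + (d - m) * r := by
      have hsplit : ∑ k ∈ Finset.Ico 0 m, s k + ∑ k ∈ Finset.Ico m d, s k
          = ∑ k ∈ Finset.range d, s k := by
        rw [Finset.range_eq_Ico]
        exact Finset.sum_Ico_consecutive _ (Nat.zero_le m) hmd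
      have h1 : ∑ k ∈ Finset.Ico 0 m, s k ≤ 2 ^ m - 1 := by
        rw [← Finset.range_eq_Ico, ← CS.sum_pow]
        exact Finset.sum_le_sum fun k hk =>
          hpow k (le_of_lt (lt_of_lt_of_le (Finset.mem_range.1 hk) hmd))
      have h2 : ∑ k ∈ Finset.Ico m d, s k ≤ (d - m) * r := by
        calc ∑ k ∈ Finset.Ico m d, s k ≤ ∑ _k ∈ Finset.Ico m d, r :=
              Finset.sum_le_sum fun k _ => hler k
          _ = (d - m) * r := by rw [Finset.sum_const, Nat.card_Ico, smul_eq_mul]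
      omega
    -- now pass to the reals
    have hrpos : (0:ℝ) < (r:ℝ) := by exact_mod_cast hr1
    have hcast : ((hangingRoots d R).ncard : ℝ)
        ≤ ∑ k ∈ Finset.range d, ((2 * s k : ℝ) - (s (k+1) : ℝ)) := by
      have h1 := CS.hanging_le_sum hRleaf hfin
      have h2 : ((∑ k ∈ Finset.range d, (2 * s k - s (k+1)) : ℕ) : ℝ)
          = ∑ k ∈ Finset.range d, ((2 * s k : ℝ) - (s (k+1) : ℝ)) := by
        rw [Nat.cast_sum]
        refine Finset.sum_congr rfl fun k hk => ?_
        have := hdouble k (Finset.mem_range.1 hk)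
        rw [Nat.cast_sub (by omega)]
        push_cast
        ring
      rw [← h2]
      exact_mod_cast h1
    have htel : ∑ k ∈ Finset.range d, ((2 * s k : ℝ) - (s (k+1) : ℝ))
        = ∑ k ∈ Finset.range d, (s k : ℝ) + (s 0 : ℝ) - (s d : ℝ) := by
      have hterm : ∀ k, ((2 * s k : ℝ) - (s (k+1) : ℝ))
          = (s k : ℝ) - ((s (k+1) : ℝ) - (s k : ℝ)) := fun k => by ring
      rw [Finset.sum_congr rfl fun k _ => hterm k, Finset.sum_sub_distrib,
        Finset.sum_range_sub (fun k => (s k : ℝ))]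
      ring
    have hsumR : ∑ k ∈ Finset.range d, (s k : ℝ)
        ≤ (2:ℝ)^m - 1 + ((d:ℝ) - (m:ℝ)) * (r:ℝ) := by
      have hcast2 : ((∑ k ∈ Finset.range d, s k : ℕ) : ℝ)
          ≤ (((2 ^ m - 1) + (d - m) * r : ℕ) : ℝ) := by exact_mod_cast hsum
      rw [Nat.cast_sum] at hcast2
      calc ∑ k ∈ Finset.range d, (s k : ℝ) ≤ _ := hcast2
        _ = (2:ℝ)^m - 1 + ((d:ℝ) - (m:ℝ)) * (r:ℝ) := by
          rw [Nat.cast_add, Nat.cast_sub (Nat.one_le_two_pow), Nat.cast_mul,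
            Nat.cast_sub hmd]
          push_cast
          ring
    set t : ℝ := (2:ℝ)^m / (r:ℝ) with htdef
    have h1t : (1:ℝ) ≤ t := by
      rw [htdef, le_div_iff₀ hrpos, one_mul]
      exact_mod_cast hr2m
    have ht2 : t ≤ 2 := by
      rw [htdef, div_le_iff₀ hrpos]
      exact_mod_cast h2mr
    have hkey : (2:ℝ)^m - (r:ℝ) ≤ (r:ℝ) * Real.logb 2 t := by
      have hge := CS.logb_ge_sub_one h1t ht2
      have h := mul_le_mul_of_nonneg_left hge (le_of_lt hrpos)
      have heq : (r:ℝ) * (t - 1) = (2:ℝ)^m - (r:ℝ) := by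
        rw [htdef]; field_simp
      rw [heq] at h
      exact h
    have hlogeq : (r:ℝ) * Real.logb 2 ((N:ℝ)/(r:ℝ))
        = (r:ℝ) * Real.logb 2 t + ((d:ℝ) - (m:ℝ)) * (r:ℝ) := by
      have hr0 : (r:ℝ) ≠ 0 := ne_of_gt hrpos
      have h2m0 : ((2:ℝ)^m) ≠ 0 := by positivity
      have hNeq : (N:ℝ) = (2:ℝ)^d := by rw [hN]; push_cast; ring
      have hN0 : (N:ℝ) ≠ 0 := by rw [hNeq]; positivity
      have e1 : Real.logb 2 ((2:ℝ)^m) = (m:ℝ) := by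
        rw [Real.logb_pow, Real.logb_self_eq_one one_lt_two, mul_one]
      have e2 : Real.logb 2 ((N:ℝ)) = (d:ℝ) := by
        rw [hNeq, Real.logb_pow, Real.logb_self_eq_one one_lt_two, mul_one]
      rw [htdef, Real.logb_div h2m0 hr0, Real.logb_div hN0 hr0, e1, e2]
      ring
    have hs0R : ((s 0 : ℕ) : ℝ) = 1 := by rw [hs0]; norm_num
    have hsdR : ((s d : ℕ) : ℝ) = (r:ℝ) := by rw [hsd]
    calc ((hangingRoots d R).ncard : ℝ)
        ≤ ∑ k ∈ Finset.range d, ((2 * s k : ℝ) - (s (k+1) : ℝ)) := hcast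
      _ = ∑ k ∈ Finset.range d, (s k : ℝ) + (s 0 : ℝ) - (s d : ℝ) := htel
      _ ≤ ((2:ℝ)^m - 1 + ((d:ℝ) - (m:ℝ)) * (r:ℝ)) + 1 - (r:ℝ) := by
          rw [hs0R, hsdR]; linarith [hsumR]
      _ ≤ (r:ℝ) * Real.logb 2 t + ((d:ℝ) - (m:ℝ)) * (r:ℝ) := by linarith [hkey]
      _ = (r:ℝ) * Real.logb 2 ((N:ℝ)/(r:ℝ)) := hlogeq.symm
  · -- receiver storage
    intro u hu
    have hlog : Nat.log 2 N = d := by rw [hN, Nat.log_pow one_lt_two]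
    have himg : {v : List Bool | v <+: u} = (fun k => u.take k) '' (Set.Iic d) := by
      ext v
      simp only [Set.mem_setOf_eq, Set.mem_image, Set.mem_Iic]
      constructor
      · intro h
        exact ⟨v.length, by rw [← hu]; exact h.length_le,
          (List.prefix_iff_eq_take.1 h).symm⟩
      · rintro ⟨k, hk, rfl⟩
        exact List.take_prefix _ _
    have hinj : Set.InjOn (fun k => u.take k) (Set.Iic d) := by
      intro a ha b hb hab
      have hmin : min a d = min b d := by
        have := congrArg List.length hab
        simpa [List.length_take, hu] using this
      have ha' := Set.mem_Iic.1 ha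
      have hb' := Set.mem_Iic.1 hb
      omega
    rw [himg, Set.ncard_image_of_injOn hinj, hlog, ← Finset.coe_Iic,
      Set.ncard_coe_finset, Nat.card_Iic]
  · -- center storage
    rw [CS.cardLe, hN]
    have : 2 ^ (d + 1) = 2 * 2 ^ d := by ring
    omega
  · -- r·log₂(N/r) ≤ N − 1
    intro r' h1 h2
    have hNpos : 1 ≤ N := le_trans h1 h2
    have hrpos : (0:ℝ) < (r' : ℝ) := by exact_mod_cast h1
    have hN1 : (1:ℝ) ≤ (N : ℝ) := by exact_mod_cast hNpos
    have hrN : (r' : ℝ) ≤ (N : ℝ) := by exact_mod_cast h2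
    rcases eq_or_lt_of_le h2 with he | hlt
    · rw [he, div_self (by positivity), Real.logb_one, mul_zero]
      linarith
    · by_cases hc : 2 * r' ≤ N
      · have ht : (2:ℝ) ≤ (N:ℝ) / (r':ℝ) := by
          rw [le_div_iff₀ hrpos]
          exact_mod_cast hc
        have hb := CS.logb_le_sub_one ht
        have hmul : (r':ℝ) * Real.logb 2 ((N:ℝ)/(r':ℝ)) ≤ (r':ℝ) * ((N:ℝ)/(r':ℝ) - 1) :=
          mul_le_mul_of_nonneg_left hb (le_of_lt hrpos)
        have heq : (r':ℝ) * ((N:ℝ)/(r':ℝ) - 1) = (N:ℝ) - r' := by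
          field_simp
        rw [heq] at hmul
        have hr1' : (1:ℝ) ≤ (r':ℝ) := by exact_mod_cast h1
        linarith
      · push_neg at hc
        have hc' : (N:ℝ) + 1 ≤ 2 * (r':ℝ) := by exact_mod_cast hc
        have hdiv : (0:ℝ) < (N:ℝ)/(r':ℝ) := by positivity
        have hlog := Real.log_le_sub_one_of_pos hdiv
        have hl2 : (0.6931471803 : ℝ) < Real.log 2 := Real.log_two_gt_d9
        have hx : (r':ℝ) * Real.log ((N:ℝ)/(r':ℝ)) ≤ (N:ℝ) - r' := by
          have := mul_le_mul_of_nonneg_left hlog (le_of_lt hrpos)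
          have heq : (r':ℝ) * ((N:ℝ)/(r':ℝ) - 1) = (N:ℝ) - r' := by field_simp
          linarith [heq ▸ this]
        rw [Real.logb, ← mul_div_assoc, div_le_iff₀ (by linarith : (0:ℝ) < Real.log 2)]
        nlinarith [Real.log_nonneg (by rw [le_div_iff₀ hrpos]; linarith : (1:ℝ) ≤ (N:ℝ)/(r':ℝ))]
end
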